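/- For the spin-1/2 representation of the Sklyanin algebra, under the identification of Θ^{2+}_{00} with ℂ² via the basis (θ₀₀(2z,2τ)-θ₁₀(2z,2τ), θ₀₀(2z,2τ)+θ₁₀(2z,2τ)), the difference operators ρ^{1/2}(S^a) defined by (ρ^{1/2}(S^a)f)(z) = (s_a(z-η/2)f(z+η) - s_a(-z-η/2)f(z-η))/θ₁₁(2z,τ), with s₀(z)=θ₁₁(η,τ)θ₁₁(2z,τ), s₁(z)=θ₁₀(η,τ)θ₁₀(2z,τ), s₂(z)=iθ₀₀(η,τ)θ₀₀(2z,τ), s₃(z)=θ₀₁(η,τ)θ₀₁(2z,τ), act as ρ^{1/2}(S^a) = θ₁₁(2η,τ)·σ^a, where σ^a are the Pauli matrices (σ^0 = identity). -/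

import Mathlib

/-!
Each coefficient `s_a(v)` is a product `θ_ab(η) θ_ab(2v)` of two theta functions of period `τ`.
Write `θ_s(w, τ) = ∑ₙ exp(πi (n+s)² τ + 2πi (n+s) w)`, so that `θ_ab(z, τ) = θ_{a/2}(b/2 + z, τ)`.
Regrouping the double series of a product according to the parity of `m - n` gives
`θ_s(x, τ) θ_s(y, τ) = θ_s(x+y, 2τ) θ_0(x-y, 2τ) + θ_{s+1/2}(x+y, 2τ) θ_{1/2}(x-y, 2τ)`,
so every product `θ_ab(u) θ_ab(v)` is a bilinear expression in the even functions
`θ₀₀(·, 2τ)` and `θ₁₀(·, 2τ)` evaluated at `u + v` and `u - v`. After this substitution each of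
the eight identities is a polynomial identity in the values of these two functions at
`2z`, `2(z + η)` and `2(z - η)`.
-/
open Complex

/-- The theta function θ_{ab}(z,τ) with characteristics a,b. -/
noncomputable def jtheta (a b : ℝ) (z τ : ℂ) : ℂ :=
  ∑' n : ℤ, Complex.exp (Real.pi * Complex.I * ((a : ℂ)/2 + (n : ℂ))^2 * τ
      + 2 * Real.pi * Complex.I * ((a : ℂ)/2 + (n : ℂ)) * ((b : ℂ)/2 + z))

/-- The coefficient functions s_a(z) of the Sklyanin difference operators. -/
noncomputable def sfun (η τ : ℂ) : Fin 4 → ℂ → ℂ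
  | 0 => fun z => jtheta 1 1 η τ * jtheta 1 1 (2*z) τ
  | 1 => fun z => jtheta 1 0 η τ * jtheta 1 0 (2*z) τ
  | 2 => fun z => Complex.I * jtheta 0 0 η τ * jtheta 0 0 (2*z) τ
  | 3 => fun z => jtheta 0 1 η τ * jtheta 0 1 (2*z) τ

/-- The numerator of the spin-1/2 Sklyanin difference operator ρ^{1/2}(S^a):
(ρ^{1/2}(S^a)f)(z)·θ₁₁(2z,τ) = s_a(z-η/2)f(z+η) - s_a(-z-η/2)f(z-η). -/
noncomputable def Snum (η τ : ℂ) (a : Fin 4) (f : ℂ → ℂ) (z : ℂ) : ℂ :=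
  sfun η τ a (z - η/2) * f (z + η) - sfun η τ a (-z - η/2) * f (z - η)

/-- First basis vector of Θ^{2+}_{00}: θ₀₀(2z,2τ) - θ₁₀(2z,2τ). -/
noncomputable def f₁ (τ z : ℂ) : ℂ := jtheta 0 0 (2*z) (2*τ) - jtheta 1 0 (2*z) (2*τ)

/-- Second basis vector of Θ^{2+}_{00}: θ₀₀(2z,2τ) + θ₁₀(2z,2τ). -/
noncomputable def f₂ (τ z : ℂ) : ℂ := jtheta 0 0 (2*z) (2*τ) + jtheta 1 0 (2*z) (2*τ)

open Real

noncomputable def thetaTerm (s w τ : ℂ) (n : ℤ) : ℂ :=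
  cexp (π * I * (s + n) ^ 2 * τ + 2 * π * I * (s + n) * w)

noncomputable def thetaChar (s w τ : ℂ) : ℂ := ∑' n : ℤ, thetaTerm s w τ n

lemma thetaTerm_eq_mul_jacobiTheta₂_term (s w τ : ℂ) (n : ℤ) :
    thetaTerm s w τ n
      = cexp (π * I * s ^ 2 * τ + 2 * π * I * s * w) * jacobiTheta₂_term n (w + s * τ) τ := by
  rw [thetaTerm, jacobiTheta₂_term, ← Complex.exp_add]
  ring_nf

lemma summable_thetaTerm {τ : ℂ} (hτ : 0 < τ.im) (s w : ℂ) : Summable (thetaTerm s w τ) :=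
  (((summable_jacobiTheta₂_term_iff _ τ).mpr hτ).mul_left _).congr fun n =>
    (thetaTerm_eq_mul_jacobiTheta₂_term s w τ n).symm

lemma hasSum_thetaTerm_mul_thetaTerm {τ : ℂ} (hτ : 0 < τ.im) (s x s' y : ℂ) :
    HasSum (fun q : ℤ × ℤ => thetaTerm s x τ q.1 * thetaTerm s' y τ q.2)
      (thetaChar s x τ * thetaChar s' y τ) :=
  (summable_thetaTerm hτ s x).hasSum.mul (summable_thetaTerm hτ s' y).hasSum <|
    summable_mul_of_summable_norm (summable_thetaTerm hτ s x).norm (summable_thetaTerm hτ s' y).norm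

/-- Splits `(m, n) : ℤ × ℤ` according to the parity of `m - n`. -/
def sumDiffParityEquiv : (ℤ × ℤ) ⊕ (ℤ × ℤ) ≃ ℤ × ℤ where
  toFun
    | .inl (k, l) => (k + l, k - l)
    | .inr (k, l) => (k + l + 1, k - l)
  invFun q :=
    if (q.1 - q.2) % 2 = 0 then .inl ((q.1 + q.2) / 2, (q.1 - q.2) / 2)
    else .inr ((q.1 + q.2) / 2, (q.1 - q.2) / 2)
  left_inv := by
    rintro (⟨k, l⟩ | ⟨k, l⟩) <;> dsimp only
    · rw [if_pos (by omega), Sum.inl.injEq, Prod.mk.injEq]; omega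
    · rw [if_neg (by omega), Sum.inr.injEq, Prod.mk.injEq]; omega
  right_inv := by
    rintro ⟨m, n⟩
    dsimp only
    split_ifs <;> simp only [Prod.mk.injEq] <;> omega

lemma thetaTerm_add_mul_thetaTerm_sub (s x y τ : ℂ) (k l : ℤ) :
    thetaTerm s x τ (k + l) * thetaTerm s y τ (k - l)
      = thetaTerm s (x + y) (2 * τ) k * thetaTerm 0 (x - y) (2 * τ) l := by
  simp only [thetaTerm, ← Complex.exp_add]
  push_cast
  ring_nf

lemma thetaTerm_add_add_one_mul_thetaTerm_sub (s x y τ : ℂ) (k l : ℤ) :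
    thetaTerm s x τ (k + l + 1) * thetaTerm s y τ (k - l)
      = thetaTerm (s + 1/2) (x + y) (2 * τ) k * thetaTerm (1/2) (x - y) (2 * τ) l := by
  simp only [thetaTerm, ← Complex.exp_add]
  push_cast
  ring_nf

theorem thetaChar_mul_thetaChar {τ : ℂ} (hτ : 0 < τ.im) (s x y : ℂ) :
    thetaChar s x τ * thetaChar s y τ
      = thetaChar s (x + y) (2 * τ) * thetaChar 0 (x - y) (2 * τ)
        + thetaChar (s + 1/2) (x + y) (2 * τ) * thetaChar (1/2) (x - y) (2 * τ) := by
  have h2τ : 0 < (2 * τ).im := by simpa using hτ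
  have hprod := (sumDiffParityEquiv.hasSum_iff).mpr (hasSum_thetaTerm_mul_thetaTerm hτ s x s y)
  refine hprod.unique (HasSum.sum ?_ ?_)
  · convert hasSum_thetaTerm_mul_thetaTerm h2τ s (x + y) 0 (x - y) using 1
    exact funext fun ⟨k, l⟩ => thetaTerm_add_mul_thetaTerm_sub s x y τ k l
  · convert hasSum_thetaTerm_mul_thetaTerm h2τ (s + 1/2) (x + y) (1/2) (x - y) using 1
    exact funext fun ⟨k, l⟩ => thetaTerm_add_add_one_mul_thetaTerm_sub s x y τ k l

lemma thetaChar_add_one (s w τ : ℂ) :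
    thetaChar s (w + 1) τ = cexp (2 * π * I * s) * thetaChar s w τ := by
  rw [thetaChar, thetaChar, ← tsum_mul_left]
  refine tsum_congr fun n => ?_
  rw [thetaTerm, thetaTerm, ← Complex.exp_add]
  exact Complex.exp_eq_exp_iff_exists_int.mpr ⟨n, by ring⟩

lemma thetaChar_char_add_one (s w τ : ℂ) : thetaChar (s + 1) w τ = thetaChar s w τ := by
  rw [thetaChar, thetaChar, ← (Equiv.addRight (1 : ℤ)).tsum_eq (thetaTerm s w τ)]
  refine tsum_congr fun n => ?_
  simp only [thetaTerm, Equiv.coe_addRight]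
  push_cast
  ring_nf

lemma thetaChar_neg (s w τ : ℂ) : thetaChar s (-w) τ = thetaChar (-s) w τ := by
  rw [thetaChar, thetaChar, ← (Equiv.neg ℤ).tsum_eq (thetaTerm (-s) w τ)]
  refine tsum_congr fun n => ?_
  simp only [thetaTerm, Equiv.neg_apply]
  push_cast
  ring_nf

lemma jtheta_eq_thetaChar (a b : ℝ) (z τ : ℂ) :
    jtheta a b z τ = thetaChar (a / 2) (b / 2 + z) τ := rfl

lemma jtheta₀₀_neg (w τ : ℂ) : jtheta 0 0 (-w) τ = jtheta 0 0 w τ := by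
  simp [jtheta_eq_thetaChar, thetaChar_neg]

lemma jtheta₁₀_neg (w τ : ℂ) : jtheta 1 0 (-w) τ = jtheta 1 0 w τ := by
  simp only [jtheta_eq_thetaChar, ofReal_one, ofReal_zero, zero_div, zero_add, thetaChar_neg]
  rw [← thetaChar_char_add_one]
  norm_num

lemma thetaChar_zero_add_one (w τ : ℂ) : thetaChar 0 (w + 1) τ = thetaChar 0 w τ := by
  simp [thetaChar_add_one]

lemma thetaChar_half_add_one (w τ : ℂ) : thetaChar (1/2) (w + 1) τ = -thetaChar (1/2) w τ := by
  rw [thetaChar_add_one, show 2 * π * I * (1/2 : ℂ) = π * I by ring, exp_pi_mul_I, neg_one_mul]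

lemma thetaChar_half_add_half (w τ : ℂ) : thetaChar (1/2 + 1/2) w τ = thetaChar 0 w τ := by
  rw [add_halves, ← thetaChar_char_add_one 0, zero_add]

lemma jtheta₀₀_mul {τ : ℂ} (hτ : 0 < τ.im) (u v : ℂ) :
    jtheta 0 0 u τ * jtheta 0 0 v τ
      = jtheta 0 0 (u + v) (2 * τ) * jtheta 0 0 (u - v) (2 * τ)
        + jtheta 1 0 (u + v) (2 * τ) * jtheta 1 0 (u - v) (2 * τ) := by
  have h := thetaChar_mul_thetaChar hτ 0 u v
  simp only [jtheta_eq_thetaChar, ofReal_one, ofReal_zero, zero_div, zero_add] at h ⊢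
  exact h

lemma jtheta₁₀_mul {τ : ℂ} (hτ : 0 < τ.im) (u v : ℂ) :
    jtheta 1 0 u τ * jtheta 1 0 v τ
      = jtheta 1 0 (u + v) (2 * τ) * jtheta 0 0 (u - v) (2 * τ)
        + jtheta 0 0 (u + v) (2 * τ) * jtheta 1 0 (u - v) (2 * τ) := by
  have h := thetaChar_mul_thetaChar hτ (1/2) u v
  rw [thetaChar_half_add_half] at h
  simp only [jtheta_eq_thetaChar, ofReal_one, ofReal_zero, zero_div, zero_add] at h ⊢
  rw [h, add_comm]

lemma jtheta₀₁_mul {τ : ℂ} (hτ : 0 < τ.im) (u v : ℂ) :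
    jtheta 0 1 u τ * jtheta 0 1 v τ
      = jtheta 0 0 (u + v) (2 * τ) * jtheta 0 0 (u - v) (2 * τ)
        - jtheta 1 0 (u + v) (2 * τ) * jtheta 1 0 (u - v) (2 * τ) := by
  have h := thetaChar_mul_thetaChar hτ 0 (1/2 + u) (1/2 + v)
  rw [show 1/2 + u + (1/2 + v) = u + v + 1 by ring, show 1/2 + u - (1/2 + v) = u - v by ring,
    zero_add, thetaChar_zero_add_one, thetaChar_half_add_one] at h
  simp only [jtheta_eq_thetaChar, ofReal_one, ofReal_zero, zero_div, zero_add] at h ⊢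
  rw [h]
  ring

lemma jtheta₁₁_mul {τ : ℂ} (hτ : 0 < τ.im) (u v : ℂ) :
    jtheta 1 1 u τ * jtheta 1 1 v τ
      = jtheta 0 0 (u + v) (2 * τ) * jtheta 1 0 (u - v) (2 * τ)
        - jtheta 1 0 (u + v) (2 * τ) * jtheta 0 0 (u - v) (2 * τ) := by
  have h := thetaChar_mul_thetaChar hτ (1/2) (1/2 + u) (1/2 + v)
  rw [show 1/2 + u + (1/2 + v) = u + v + 1 by ring, show 1/2 + u - (1/2 + v) = u - v by ring,
    thetaChar_half_add_half, thetaChar_zero_add_one, thetaChar_half_add_one] at h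
  simp only [jtheta_eq_thetaChar, ofReal_one, ofReal_zero, zero_div, zero_add] at h ⊢
  rw [h]
  ring

noncomputable def sklyaninForm (τ : ℂ) : Fin 4 → ℂ → ℂ → ℂ
  | 0 => fun x y =>
    jtheta 0 0 x (2 * τ) * jtheta 1 0 y (2 * τ) - jtheta 1 0 x (2 * τ) * jtheta 0 0 y (2 * τ)
  | 1 => fun x y =>
    jtheta 1 0 x (2 * τ) * jtheta 0 0 y (2 * τ) + jtheta 0 0 x (2 * τ) * jtheta 1 0 y (2 * τ)
  | 2 => fun x y =>
    I * (jtheta 0 0 x (2 * τ) * jtheta 0 0 y (2 * τ) + jtheta 1 0 x (2 * τ) * jtheta 1 0 y (2 * τ))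
  | 3 => fun x y =>
    jtheta 0 0 x (2 * τ) * jtheta 0 0 y (2 * τ) - jtheta 1 0 x (2 * τ) * jtheta 1 0 y (2 * τ)

lemma sfun_eq_sklyaninForm {τ : ℂ} (hτ : 0 < τ.im) (η : ℂ) (a : Fin 4) (v : ℂ) :
    sfun η τ a v = sklyaninForm τ a (η + 2 * v) (η - 2 * v) := by
  fin_cases a
  · exact jtheta₁₁_mul hτ η (2 * v)
  · exact jtheta₁₀_mul hτ η (2 * v)
  · exact (mul_assoc _ _ _).trans (congrArg _ (jtheta₀₀_mul hτ η (2 * v)))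
  · exact jtheta₀₁_mul hτ η (2 * v)

/-- In the basis (f₁, f₂) of Θ^{2+}_{00}, the spin-1/2 representation of the
Sklyanin algebra is ρ^{1/2}(S^a) = θ₁₁(2η,τ)·σ^a, σ^a the Pauli matrices
(σ⁰ = 1). Written in the multiplied form, with c(z) = θ₁₁(2z,τ)θ₁₁(2η,τ). -/
theorem spin_half_representation_pauli (τ η : ℂ) (hτ : 0 < τ.im) :
    ∀ z : ℂ,
      Snum η τ 0 (f₁ τ) z = jtheta 1 1 (2*z) τ * jtheta 1 1 (2*η) τ * f₁ τ z ∧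
      Snum η τ 0 (f₂ τ) z = jtheta 1 1 (2*z) τ * jtheta 1 1 (2*η) τ * f₂ τ z ∧
      Snum η τ 1 (f₁ τ) z = jtheta 1 1 (2*z) τ * jtheta 1 1 (2*η) τ * f₂ τ z ∧
      Snum η τ 1 (f₂ τ) z = jtheta 1 1 (2*z) τ * jtheta 1 1 (2*η) τ * f₁ τ z ∧
      Snum η τ 2 (f₁ τ) z
        = jtheta 1 1 (2*z) τ * jtheta 1 1 (2*η) τ * (Complex.I * f₂ τ z) ∧
      Snum η τ 2 (f₂ τ) z
        = jtheta 1 1 (2*z) τ * jtheta 1 1 (2*η) τ * (-Complex.I * f₁ τ z) ∧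
      Snum η τ 3 (f₁ τ) z = jtheta 1 1 (2*z) τ * jtheta 1 1 (2*η) τ * f₁ τ z ∧
      Snum η τ 3 (f₂ τ) z = jtheta 1 1 (2*z) τ * jtheta 1 1 (2*η) τ * (- f₂ τ z) := by
  intro z
  have hc : jtheta 1 1 (2*z) τ * jtheta 1 1 (2*η) τ
      = sklyaninForm τ 0 (2 * (z + η)) (2 * (z - η)) := by
    rw [mul_add, mul_sub]
    exact jtheta₁₁_mul hτ (2*z) (2*η)
  have e₁ : η + 2 * (z - η/2) = 2 * z := by ring
  have e₂ : η - 2 * (z - η/2) = -(2 * (z - η)) := by ring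
  have e₃ : η + 2 * (-z - η/2) = -(2 * z) := by ring
  have e₄ : η - 2 * (-z - η/2) = 2 * (z + η) := by ring
  simp only [Snum, sfun_eq_sklyaninForm hτ, e₁, e₂, e₃, e₄, hc, sklyaninForm, f₁, f₂,
    jtheta₀₀_neg, jtheta₁₀_neg]
  refine ⟨?_, ?_, ?_, ?_, ?_, ?_, ?_, ?_⟩ <;> ring
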